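/- The group presented as ⟨a, b | a·b·a = b·a·b, a⁻¹·b·a²·b·a⁻² = 1⟩ (the trefoil knot group with the framing-1 longitude λ = caba⁻², c = a⁻¹ba, set equal to the identity) is isomorphic to the binary icosahedral group presented as ⟨A, B, C | A⁵ = B³ = C² = A·B·C⟩. -/

import Mathlib

/-!
The two presentations are related by a Tietze transformation: `A = a`, `B = ba`, `C = aba`, with
inverse `a = A`, `b = BA⁻¹`. The relation `C² = ABC` says exactly `C = AB`; after that, the braid
relation becomes `ABA = B²` and the longitude relation becomes `BAB = A⁴`, and together these are
equivalent to `A⁵ = B³ = (AB)²`.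
-/

/-- The relators of the presentation `⟨a, b | a·b·a = b·a·b, a⁻¹·b·a²·b·a⁻² = 1⟩`:
the trefoil knot group with the framing-1 longitude `λ = caba⁻²` (`c = a⁻¹ba`)
set equal to the identity. Generators: `a = of 0`, `b = of 1`. -/
def trefoilFramingOneRels : Set (FreeGroup (Fin 2)) :=
  { (FreeGroup.of 0 * FreeGroup.of 1 * FreeGroup.of 0) *
      (FreeGroup.of 1 * FreeGroup.of 0 * FreeGroup.of 1)⁻¹,
    (FreeGroup.of 0)⁻¹ * FreeGroup.of 1 * FreeGroup.of 0 ^ 2 * FreeGroup.of 1 *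
      (FreeGroup.of 0 ^ 2)⁻¹ }

/-- The relators of the presentation `⟨A, B, C | A⁵ = B³ = C² = A·B·C⟩` of the
binary icosahedral group `⟨5,3,2⟩`. Generators: `A = of 0`, `B = of 1`, `C = of 2`. -/
def binaryIcosahedralRels : Set (FreeGroup (Fin 3)) :=
  { FreeGroup.of 0 ^ 5 * (FreeGroup.of 1 ^ 3)⁻¹,
    FreeGroup.of 1 ^ 3 * (FreeGroup.of 2 ^ 2)⁻¹,
    FreeGroup.of 2 ^ 2 * (FreeGroup.of 0 * FreeGroup.of 1 * FreeGroup.of 2)⁻¹ }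

theorem PresentedGroup.lift_of_eq_one {α : Type*} {rels : Set (FreeGroup α)} :
    ∀ r ∈ rels, FreeGroup.lift (PresentedGroup.of (rels := rels)) r = 1 := by
  intro r hr
  rw [show FreeGroup.lift PresentedGroup.of = PresentedGroup.mk rels from
    FreeGroup.ext_hom _ _ fun _ => rfl]
  exact PresentedGroup.one_of_mem hr

section
variable {G : Type*} [Group G]

theorem trefoilFramingOneRels_lift_eq_one_iff (f : Fin 2 → G) :
    (∀ r ∈ trefoilFramingOneRels, FreeGroup.lift f r = 1) ↔
      f 0 * f 1 * f 0 = f 1 * f 0 * f 1 ∧ f 1 * f 0 ^ 2 * f 1 = f 0 ^ 3 := by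
  simp only [trefoilFramingOneRels, Set.mem_insert_iff, Set.mem_singleton_iff, forall_eq_or_imp,
    forall_eq, map_mul, map_inv, map_pow, FreeGroup.lift_apply_of, mul_inv_eq_one]
  simp only [mul_assoc, inv_mul_eq_iff_eq_mul, ← pow_succ']

theorem binaryIcosahedralRels_lift_eq_one_iff (f : Fin 3 → G) :
    (∀ r ∈ binaryIcosahedralRels, FreeGroup.lift f r = 1) ↔
      f 0 ^ 5 = f 1 ^ 3 ∧ f 1 ^ 3 = f 2 ^ 2 ∧ f 2 ^ 2 = f 0 * f 1 * f 2 := by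
  simp only [binaryIcosahedralRels, Set.mem_insert_iff, Set.mem_singleton_iff, forall_eq_or_imp,
    forall_eq, map_mul, map_inv, map_pow, FreeGroup.lift_apply_of, mul_inv_eq_one]

theorem eq_of_sq_eq_mul {x y : G} (h : x ^ 2 = y * x) : x = y :=
  mul_right_cancel (by rw [← sq, h])

theorem binaryIcosahedral_relations_of_trefoil {a b : G} (hbraid : a * b * a = b * a * b)
    (hlong : b * a ^ 2 * b = a ^ 3) :
    a ^ 5 = (b * a) ^ 3 ∧ (b * a) ^ 3 = (a * b * a) ^ 2 ∧
      (a * b * a) ^ 2 = a * (b * a) * (a * b * a) := by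
  have hsq : (a * b * a) ^ 2 = a ^ 5 := calc
    (a * b * a) ^ 2 = a * (b * a ^ 2 * b) * a := by rw [sq, sq]; group
    _ = a ^ 5 := by rw [hlong]; group
  have hcube : (b * a) ^ 3 = (a * b * a) ^ 2 := calc
    (b * a) ^ 3 = b * a * b * (a * b * a) := by rw [pow_three]; group
    _ = (a * b * a) ^ 2 := by rw [← hbraid, sq]
  exact ⟨hsq.symm.trans hcube.symm, hcube, by rw [sq]; group⟩

theorem trefoil_relations_of_binaryIcosahedral {A B C : G} (h₁ : A ^ 5 = B ^ 3)
    (h₂ : B ^ 3 = C ^ 2) (h₃ : C ^ 2 = A * B * C) :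
    A * (B * A⁻¹) * A = B * A⁻¹ * A * (B * A⁻¹) ∧ B * A⁻¹ * A ^ 2 * (B * A⁻¹) = A ^ 3 := by
  have hAB : (A * B) ^ 2 = A ^ 5 := by rw [← eq_of_sq_eq_mul h₃, ← h₂, h₁]
  have hABA : A * B * A = B ^ 2 := mul_right_cancel (b := B) <| calc
    A * B * A * B = (A * B) ^ 2 := by rw [sq]; group
    _ = B ^ 2 * B := by rw [hAB, h₁]; group
  have hBAB : B * A * B = A ^ 4 := mul_left_cancel (a := A) <| calc
    A * (B * A * B) = (A * B) ^ 2 := by rw [sq]; group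
    _ = A * A ^ 4 := by rw [hAB]; group
  constructor
  · calc A * (B * A⁻¹) * A = A * B * A * A⁻¹ := by group
      _ = B * A⁻¹ * A * (B * A⁻¹) := by rw [hABA, sq]; group
  · calc B * A⁻¹ * A ^ 2 * (B * A⁻¹) = B * A * B * A⁻¹ := by group
      _ = A ^ 3 := by rw [hBAB]; group

end

open PresentedGroup

theorem trefoilFramingOne_relations :
    (of 0 * of 1 * of 0 : PresentedGroup trefoilFramingOneRels) = of 1 * of 0 * of 1 ∧
      of 1 * of 0 ^ 2 * of 1 = (of 0 : PresentedGroup trefoilFramingOneRels) ^ 3 :=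
  (trefoilFramingOneRels_lift_eq_one_iff _).1 lift_of_eq_one

theorem binaryIcosahedral_relations :
    (of 0 : PresentedGroup binaryIcosahedralRels) ^ 5 = of 1 ^ 3 ∧
      (of 1 : PresentedGroup binaryIcosahedralRels) ^ 3 = of 2 ^ 2 ∧
      (of 2 : PresentedGroup binaryIcosahedralRels) ^ 2 = of 0 * of 1 * of 2 :=
  (binaryIcosahedralRels_lift_eq_one_iff _).1 lift_of_eq_one

def trefoilFramingOneToBinaryIcosahedral :
    PresentedGroup trefoilFramingOneRels →* PresentedGroup binaryIcosahedralRels :=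
  toGroup (f := ![of 0, of 1 * (of 0)⁻¹]) <| (trefoilFramingOneRels_lift_eq_one_iff _).2 <|
    let ⟨h₁, h₂, h₃⟩ := binaryIcosahedral_relations
    trefoil_relations_of_binaryIcosahedral h₁ h₂ h₃

def binaryIcosahedralToTrefoilFramingOne :
    PresentedGroup binaryIcosahedralRels →* PresentedGroup trefoilFramingOneRels :=
  toGroup (f := ![of 0, of 1 * of 0, of 0 * of 1 * of 0]) <|
    (binaryIcosahedralRels_lift_eq_one_iff _).2 <|
      binaryIcosahedral_relations_of_trefoil trefoilFramingOne_relations.1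
        trefoilFramingOne_relations.2

/-- The group `⟨a, b | a·b·a = b·a·b, a⁻¹·b·a²·b·a⁻² = 1⟩` (the trefoil knot group
with the framing-1 longitude collapsed, i.e. the fundamental group of the Poincaré
homology sphere) is isomorphic to the binary icosahedral group
`⟨A, B, C | A⁵ = B³ = C² = A·B·C⟩`. -/
theorem trefoil_framing_one_iso_binary_icosahedral :
    Nonempty (PresentedGroup trefoilFramingOneRels ≃*
      PresentedGroup binaryIcosahedralRels) := by
  refine ⟨MonoidHom.toMulEquiv trefoilFramingOneToBinaryIcosahedral
    binaryIcosahedralToTrefoilFramingOne (ext fun i => ?_) (ext fun i => ?_)⟩ <;>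
  fin_cases i <;>
  simp [trefoilFramingOneToBinaryIcosahedral, binaryIcosahedralToTrefoilFramingOne, toGroup.of,
    eq_of_sq_eq_mul binaryIcosahedral_relations.2.2]
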